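/- arXiv:1511.07469 — 2 statements merged into one kernel-verified Lean document; each statement's English description precedes it below -/
import Mathlib

section
/- Let H_r, H_u be independent exponential random variables with means σ_r², σ_u², let P_u, Δ_u, N₀ > 0 and g > 1. If the relay power is P_r = P_u σ_{uv}² (g - 1)/(Δ_u σ_r²) where g = exp(-Δ_u N₀/(P_u σ_{uv}²))/(1 - P_th) and 0 < P_th < 1, then the primary outage probability P(P_u H_{uv}/(P_r H_r + N₀) < Δ_u) = 1 - exp(-Δ_u N₀/(P_u σ_{uv}²))/(Δ_u P_r σ_r²/(P_u σ_{uv}²) + 1) equals exactly P_th. -/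
/-! Integrate out `H_uv` first: given `H_r = r`, outage means `H_uv < Δu (Pr r + N0) / Pu`, which
has probability `1 - exp (-Δu N0 / (Pu σuv)) * exp (-s r)` with `s = Δu Pr / (Pu σuv)`. Averaging
over `H_r` turns the second term into the Laplace transform `1 / (s σr + 1)` of the exponential
law, and the chosen relay power is exactly the one making `s σr + 1 = g`. -/

open MeasureTheory Real Set

lemma exp_neg_div_eq_exp_mul (σ x : ℝ) : exp (-x / σ) = exp (-σ⁻¹ * x) := by
  ring_nf

section ExponentialDensity

variable {σ : ℝ}

lemma integrableOn_Ioi_exp_density (hσ : 0 < σ) (a : ℝ) :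
    IntegrableOn (fun x => 1 / σ * exp (-x / σ)) (Ioi a) := by
  simp_rw [exp_neg_div_eq_exp_mul]
  exact (integrableOn_exp_mul_Ioi (neg_neg_of_pos (inv_pos.2 hσ)) a).const_mul _

lemma integral_Ioi_exp_density (hσ : 0 < σ) (a : ℝ) :
    ∫ x in Ioi a, 1 / σ * exp (-x / σ) = exp (-a / σ) := by
  simp_rw [integral_const_mul, exp_neg_div_eq_exp_mul,
    integral_exp_mul_Ioi (neg_neg_of_pos (inv_pos.2 hσ))]
  field_simp

lemma integral_Ioi_zero_ite_lt_mul_exp_density (hσ : 0 < σ) {c : ℝ} (hc : 0 ≤ c) :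
    ∫ x in Ioi 0, (if x < c then (1 : ℝ) else 0) * (1 / σ * exp (-x / σ))
      = 1 - exp (-c / σ) := by
  have hind : (fun x => (if x < c then (1 : ℝ) else 0) * (1 / σ * exp (-x / σ)))
      = (Iio c).indicator (fun x => 1 / σ * exp (-x / σ)) := by
    ext x; simp only [indicator_apply, mem_Iio]; split_ifs <;> ring
  rw [hind, setIntegral_indicator measurableSet_Iio, Ioi_inter_Iio,
    ← integral_Ioc_eq_integral_Ioo, ← intervalIntegral.integral_of_le hc,
    ← intervalIntegral.integral_Ioi_sub_Ioi (integrableOn_Ioi_exp_density hσ 0) hc,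
    integral_Ioi_exp_density hσ, integral_Ioi_exp_density hσ, neg_zero, zero_div, exp_zero]

lemma integral_Ioi_zero_exp_density_mul_exp (hσ : 0 < σ) {s : ℝ} (hs : 0 < s * σ + 1) :
    ∫ x in Ioi 0, 1 / σ * exp (-x / σ) * exp (-(s * x)) = 1 / (s * σ + 1) := by
  have hrate : -(σ⁻¹ + s) < 0 := by
    rw [neg_neg_iff_pos, ← mul_pos_iff_of_pos_right hσ, add_mul, inv_mul_cancel₀ hσ.ne']
    linarith
  have hexp : ∀ x, 1 / σ * exp (-x / σ) * exp (-(s * x)) = 1 / σ * exp (-(σ⁻¹ + s) * x) := by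
    intro x
    rw [mul_assoc, ← exp_add]
    ring_nf
  simp_rw [hexp, integral_const_mul, integral_exp_mul_Ioi hrate, mul_zero, exp_zero]
  field_simp
  ring

end ExponentialDensity

lemma integral_Ioi_zero_outage_given {Pu Δu N0 σuv Pr r : ℝ} (hPu : 0 < Pu) (hΔu : 0 < Δu)
    (hN0 : 0 < N0) (hσuv : 0 < σuv) (hPr : 0 ≤ Pr) (hr : 0 < r) :
    ∫ u in Ioi (0:ℝ), (if Pu * u / (Pr * r + N0) < Δu then (1:ℝ) else 0) *
        ((1 / σuv) * exp (-u / σuv))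
      = 1 - exp (-(Δu * N0) / (Pu * σuv)) * exp (-(Δu * Pr / (Pu * σuv) * r)) := by
  have hden : 0 < Pr * r + N0 := by positivity
  have hcond : ∀ u, Pu * u / (Pr * r + N0) < Δu ↔ u < Δu * (Pr * r + N0) / Pu := fun u => by
    rw [div_lt_iff₀ hden, lt_div_iff₀ hPu, mul_comm u]
  simp only [hcond]
  rw [integral_Ioi_zero_ite_lt_mul_exp_density hσuv (by positivity), ← exp_add]
  congr 2
  field_simp
  ring

lemma integral_outage_probability_eq {Pu Δu N0 σuv σr Pr : ℝ} (hPu : 0 < Pu) (hΔu : 0 < Δu)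
    (hN0 : 0 < N0) (hσuv : 0 < σuv) (hσr : 0 < σr) (hPr : 0 ≤ Pr) :
    (∫ u in Ioi (0:ℝ), ∫ r in Ioi (0:ℝ),
        (if Pu * u / (Pr * r + N0) < Δu then (1:ℝ) else 0) *
          ((1 / σuv) * exp (-u / σuv)) * ((1 / σr) * exp (-r / σr)))
      = 1 - exp (-(Δu * N0) / (Pu * σuv)) / (Δu * Pr * σr / (Pu * σuv) + 1) := by
  have hint : Integrable (Function.uncurry fun u r =>
      (if Pu * u / (Pr * r + N0) < Δu then (1:ℝ) else 0) *
        ((1 / σuv) * exp (-u / σuv)) * ((1 / σr) * exp (-r / σr)))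
      ((volume.restrict (Ioi 0)).prod (volume.restrict (Ioi 0))) := by
    have hmeas : Measurable fun p : ℝ × ℝ =>
        if Pu * p.1 / (Pr * p.2 + N0) < Δu then (1:ℝ) else 0 :=
      Measurable.ite (measurableSet_lt (by fun_prop) (by fun_prop)) measurable_const
        measurable_const
    refine (((integrableOn_Ioi_exp_density hσuv 0).mul_prod
      (integrableOn_Ioi_exp_density hσr 0)).bdd_mul (c := 1) hmeas.aestronglyMeasurable
      (Filter.Eventually.of_forall fun p => ?_)).congr (Filter.Eventually.of_forall fun p => ?_)
    · split_ifs <;> simp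
    · exact (mul_assoc _ _ _).symm
  have hinner : EqOn (fun r => ∫ u in Ioi (0:ℝ),
        (if Pu * u / (Pr * r + N0) < Δu then (1:ℝ) else 0) *
          ((1 / σuv) * exp (-u / σuv)) * ((1 / σr) * exp (-r / σr)))
      (fun r => 1 / σr * exp (-r / σr) - exp (-(Δu * N0) / (Pu * σuv)) *
        (1 / σr * exp (-r / σr) * exp (-(Δu * Pr / (Pu * σuv) * r))))
      (Ioi 0) := by
    intro r hr
    dsimp only
    rw [integral_mul_const, integral_Ioi_zero_outage_given hPu hΔu hN0 hσuv hPr hr]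
    ring
  rw [integral_integral_swap hint, setIntegral_congr_fun measurableSet_Ioi hinner]
  have hlaplace :=
    integral_Ioi_zero_exp_density_mul_exp hσr (s := Δu * Pr / (Pu * σuv)) (by positivity)
  -- a Bochner integral with nonzero value certifies integrability (the junk value is `0`)
  rw [integral_sub (integrableOn_Ioi_exp_density hσr 0)
      ((Integrable.of_integral_ne_zero (by rw [hlaplace]; positivity)).const_mul _),
    integral_Ioi_exp_density hσr, integral_const_mul, hlaplace, neg_zero, zero_div, exp_zero]
  ring

theorem stmt_9_general (Pu Δu N0 σuv σr Pth g Pr : ℝ)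
    (hPu : 0 < Pu) (hΔu : 0 < Δu) (hN0 : 0 < N0) (hσuv : 0 < σuv) (hσr : 0 < σr)
    (hg : g = Real.exp (-(Δu * N0) / (Pu * σuv)) / (1 - Pth)) (hg1 : 1 < g)
    (hPr : Pr = Pu * σuv * (g - 1) / (Δu * σr)) :
    (∫ u in Set.Ioi (0:ℝ), ∫ r in Set.Ioi (0:ℝ),
        (if Pu * u / (Pr * r + N0) < Δu then (1:ℝ) else 0) *
          ((1 / σuv) * Real.exp (-u / σuv)) * ((1 / σr) * Real.exp (-r / σr)))
      = Pth := by
  have hPr_nonneg : 0 ≤ Pr := by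
    have := sub_pos.2 hg1
    rw [hPr]; positivity
  have hsnr : Δu * Pr * σr / (Pu * σuv) + 1 = g := by
    rw [hPr]; field_simp; ring
  rw [integral_outage_probability_eq hPu hΔu hN0 hσuv hσr hPr_nonneg, hsnr, hg,
    div_div_cancel₀ (exp_pos _).ne', sub_sub_cancel]

/-- Lemma 2: with relay power `Pr = Pu σuv² (g-1)/(Δu σr²)` and
`g = exp(-Δu N0/(Pu σuv²))/(1 - Pth) > 1`, the primary outage probability
`P(Pu·Huv/(Pr·Hr + N0) < Δu)` equals exactly the QoS threshold `Pth`. -/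
theorem stmt_9 (Pu Δu N0 σuv σr Pth g Pr : ℝ)
    (hPu : 0 < Pu) (hΔu : 0 < Δu) (hN0 : 0 < N0) (hσuv : 0 < σuv) (hσr : 0 < σr)
    (hPth0 : 0 < Pth) (hPth1 : Pth < 1)
    (hg : g = Real.exp (-(Δu * N0) / (Pu * σuv)) / (1 - Pth)) (hg1 : 1 < g)
    (hPr : Pr = Pu * σuv * (g - 1) / (Δu * σr)) :
    (∫ u in Set.Ioi (0:ℝ), ∫ r in Set.Ioi (0:ℝ),
        (if Pu * u / (Pr * r + N0) < Δu then (1:ℝ) else 0) *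
          ((1 / σuv) * Real.exp (-u / σuv)) * ((1 / σr) * Real.exp (-r / σr)))
      = Pth :=
  stmt_9_general Pu Δu N0 σuv σr Pth g Pr hPu hΔu hN0 hσuv hσr hg hg1 hPr
end

section
/- Let p, q > 0 with p ≠ q, and let a, b ∈ ℝ with constants such that C = p/(p - q). Then for all z ≥ 0: ∫₀^∞ g(x) (1/p) e^{-x/p} dx = 1 - C e^{-Az} - (1 - C) e^{-Bz}, where g(x) = 1 for x < Δ_s z; g(x) = 1 - exp(-(Δz - x)/q) for Δ_s z < x < (Δ - Δ_d) z; and g(x) = 1 - exp(-Δ_d z/q) for x > (Δ - Δ_d) z; here A = (Δ - Δ_d)/p + Δ_d/q, B = Δ_s/p + (Δ - Δ_s)/q, and Δ, Δ_s, Δ_d > 0 satisfy Δ - Δ_s - Δ_d = Δ_s Δ_d (so Δ > Δ_s and Δ > Δ_d). -/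
/-!
Split the half-line at `s ≤ t`. On `(0, s)` the integrand is the exponential density; on
`(s, t)` it is the density minus `exp (-(c - x) / q) * (1 / p) * exp (-x / p)`, a single
exponential in `x` with rate `1 / q - 1 / p`, which is where the factor `q / (p - q)` comes
from; on `(t, ∞)` the outage probability is constant. Since `g` is continuous at `t`
(`c - t = d`), the two boundary terms at `t` combine into `C * exp (-A z)` with `C = p / (p - q)`.
-/

open MeasureTheory Real Set

/-- The conditional outage probability `g(x)` of the paper, with `s = Δs z`, `t = (Δ - Δd) z`,
`c = Δ z` and `d = Δd z`. -/
noncomputable def condOutage (q s t c d x : ℝ) : ℝ :=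
  if x < s then 1 else if x < t then 1 - exp (-(c - x) / q) else 1 - exp (-d / q)

theorem measurable_condOutage (q s t c d : ℝ) : Measurable (condOutage q s t c d) := by
  unfold condOutage
  exact Measurable.ite measurableSet_Iio measurable_const
    (Measurable.ite measurableSet_Iio (by fun_prop) measurable_const)

theorem abs_one_sub_exp_le_one {y : ℝ} (hy : y ≤ 0) : |1 - exp y| ≤ 1 := by
  rw [abs_le]
  constructor <;> linarith [exp_pos y, exp_le_one_iff.2 hy]

theorem abs_condOutage_le_one {q s t c d : ℝ} (hq : 0 ≤ q) (htc : t ≤ c) (hd : 0 ≤ d)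
    (x : ℝ) :
    |condOutage q s t c d x| ≤ 1 := by
  unfold condOutage
  split_ifs with hs ht
  · simp
  · exact abs_one_sub_exp_le_one (div_nonpos_of_nonpos_of_nonneg (by linarith) hq)
  · exact abs_one_sub_exp_le_one (div_nonpos_of_nonpos_of_nonneg (by linarith) hq)

theorem hasDerivAt_neg_exp_neg_div (r x : ℝ) :
    HasDerivAt (fun y ↦ -exp (-y / r)) (1 / r * exp (-x / r)) x := by
  have h : HasDerivAt (fun y : ℝ ↦ -y / r) (-1 / r) x := by
    simpa using (hasDerivAt_id x).neg.div_const r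
  exact h.exp.neg.congr_deriv (by ring)

theorem integral_exp_density (r a b : ℝ) :
    ∫ x in a..b, 1 / r * exp (-x / r) = exp (-a / r) - exp (-b / r) := by
  rw [intervalIntegral.integral_eq_sub_of_hasDerivAt (fun x _ ↦ hasDerivAt_neg_exp_neg_div r x)
    ((by fun_prop : Continuous fun x ↦ 1 / r * exp (-x / r)).intervalIntegrable a b)]
  ring

theorem integrableOn_exp_density_Ioi {r : ℝ} (hr : 0 < r) (a : ℝ) :
    IntegrableOn (fun x ↦ 1 / r * exp (-x / r)) (Ioi a) := by
  have := (exp_neg_integrableOn_Ioi a (inv_pos.2 hr)).const_mul (1 / r)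
  refine IntegrableOn.congr_fun this (fun x _ ↦ ?_) measurableSet_Ioi
  ring_nf

theorem integral_exp_density_Ioi {r : ℝ} (hr : 0 < r) (a : ℝ) :
    ∫ x in Ioi a, 1 / r * exp (-x / r) = exp (-a / r) := by
  have hlim : Filter.Tendsto (fun y ↦ -exp (-y / r)) Filter.atTop (nhds 0) := by
    simpa [neg_div] using (tendsto_exp_atBot.comp
      (Filter.tendsto_neg_atTop_atBot.comp (Filter.tendsto_id.atTop_div_const hr))).neg
  rw [integral_Ioi_of_hasDerivAt_of_tendsto' (fun x _ ↦ hasDerivAt_neg_exp_neg_div r x)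
    (integrableOn_exp_density_Ioi hr a) hlim]
  ring

theorem hasDerivAt_exp_mul_exp_density {p q : ℝ} (hp : p ≠ 0) (hq : q ≠ 0) (hpq : p ≠ q)
    (c x : ℝ) :
    HasDerivAt (fun y ↦ q / (p - q) * exp (-(c - y) / q - y / p))
      (exp (-(c - x) / q) * (1 / p * exp (-x / p))) x := by
  have hexp : HasDerivAt (fun y : ℝ ↦ -(c - y) / q - y / p) (1 / q - 1 / p) x := by
    simpa using (((hasDerivAt_id x).const_sub c).neg.div_const q).fun_sub
      ((hasDerivAt_id x).div_const p)
  refine (hexp.exp.const_mul _).congr_deriv ?_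
  have hpq' : p - q ≠ 0 := sub_ne_zero.2 hpq
  rw [show -(c - x) / q - x / p = -(c - x) / q + -x / p by ring, exp_add]
  field_simp

theorem integral_exp_mul_exp_density {p q : ℝ} (hp : p ≠ 0) (hq : q ≠ 0) (hpq : p ≠ q)
    (c a b : ℝ) :
    ∫ x in a..b, exp (-(c - x) / q) * (1 / p * exp (-x / p)) =
      q / (p - q) * (exp (-(c - b) / q - b / p) - exp (-(c - a) / q - a / p)) := by
  rw [intervalIntegral.integral_eq_sub_of_hasDerivAt
    (fun x _ ↦ hasDerivAt_exp_mul_exp_density hp hq hpq c x)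
    (Continuous.intervalIntegrable (by fun_prop) a b)]
  ring

theorem integrableOn_condOutage_mul_exp_density {p q s t c d : ℝ} (hp : 0 < p) (hq : 0 ≤ q)
    (htc : t ≤ c) (hd : 0 ≤ d) (a : ℝ) :
    IntegrableOn (fun x ↦ condOutage q s t c d x * (1 / p * exp (-x / p))) (Ioi a) :=
  (integrableOn_exp_density_Ioi hp a).bdd_mul (measurable_condOutage q s t c d).aestronglyMeasurable
    (ae_of_all _ (abs_condOutage_le_one hq htc hd))

theorem integral_condOutage_mul_exp_density {p q s t c d : ℝ} (hp : 0 < p) (hq : 0 < q)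
    (hpq : p ≠ q) (hs : 0 ≤ s) (hst : s ≤ t) (hd : 0 ≤ d) (hct : c - t = d) :
    ∫ x in Ioi 0, condOutage q s t c d x * (1 / p * exp (-x / p)) =
      1 - p / (p - q) * exp (-d / q - t / p) - (1 - p / (p - q)) * exp (-(c - s) / q - s / p) := by
  have hint := integrableOn_condOutage_mul_exp_density (s := s) (t := t) hp hq.le (by linarith) hd
  rw [← intervalIntegral.integral_interval_add_Ioi (hint 0) (hint s),
    ← intervalIntegral.integral_interval_add_Ioi (hint s) (hint t)]
  have h₁ : ∫ x in (0)..s, condOutage q s t c d x * (1 / p * exp (-x / p)) =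
      1 - exp (-s / p) := by
    rw [intervalIntegral.integral_congr_Ioo_of_le hs (g := fun x ↦ 1 / p * exp (-x / p))
      (fun x hx ↦ by simp [condOutage, hx.2]), integral_exp_density]
    simp
  have h₂ : ∫ x in s..t, condOutage q s t c d x * (1 / p * exp (-x / p)) =
      exp (-s / p) - exp (-t / p) -
        q / (p - q) * (exp (-(c - t) / q - t / p) - exp (-(c - s) / q - s / p)) := by
    rw [intervalIntegral.integral_congr_Ioo_of_le hst
      (g := fun x ↦ 1 / p * exp (-x / p) - exp (-(c - x) / q) * (1 / p * exp (-x / p)))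
      (fun x hx ↦ by simp [condOutage, not_lt.2 hx.1.le, hx.2]; ring),
      intervalIntegral.integral_sub (Continuous.intervalIntegrable (by fun_prop) _ _)
        (Continuous.intervalIntegrable (by fun_prop) _ _), integral_exp_density,
      integral_exp_mul_exp_density hp.ne' hq.ne' hpq]
  have h₃ : ∫ x in Ioi t, condOutage q s t c d x * (1 / p * exp (-x / p)) =
      (1 - exp (-d / q)) * exp (-t / p) := by
    rw [setIntegral_congr_fun measurableSet_Ioi
      (g := fun x ↦ (1 - exp (-d / q)) * (1 / p * exp (-x / p)))
      (fun x (hx : t < x) ↦ by simp [condOutage, not_lt.2 (hst.trans hx.le), not_lt.2 hx.le]),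
      integral_const_mul, integral_exp_density_Ioi hp]
  have hexp : exp (-d / q - t / p) = exp (-d / q) * exp (-t / p) := by
    rw [← exp_add]; ring_nf
  rw [h₁, h₂, h₃, hct, hexp]
  have hpq' : p - q ≠ 0 := sub_ne_zero.2 hpq
  field_simp
  ring

theorem stmt_18_general (p q Δ Δs Δd A B C : ℝ)
    (hp : 0 < p) (hq : 0 < q) (hpq : p ≠ q)
    (hΔs : 0 < Δs) (hΔd : 0 < Δd) (hrel : Δ - Δs - Δd = Δs * Δd)
    (hA : A = (Δ - Δd) / p + Δd / q) (hB : B = Δs / p + (Δ - Δs) / q)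
    (hC : C = p / (p - q)) :
    ∀ z : ℝ, 0 ≤ z →
      (∫ x in Set.Ioi (0:ℝ),
          (if x < Δs * z then (1:ℝ)
           else if x < (Δ - Δd) * z then 1 - Real.exp (-(Δ * z - x) / q)
           else 1 - Real.exp (-(Δd * z) / q)) *
            ((1 / p) * Real.exp (-x / p)))
        = 1 - C * Real.exp (-A * z) - (1 - C) * Real.exp (-B * z) := by
  intro z hz
  have hst : Δs * z ≤ (Δ - Δd) * z :=
    mul_le_mul_of_nonneg_right (by nlinarith [mul_pos hΔs hΔd]) hz
  have hAz : -A * z = -(Δd * z) / q - (Δ - Δd) * z / p := by rw [hA]; ring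
  have hBz : -B * z = -(Δ * z - Δs * z) / q - Δs * z / p := by rw [hB]; ring
  rw [hAz, hBz, hC]
  exact integral_condOutage_mul_exp_density hp hq hpq (by positivity) hst (by positivity) (by ring)

/-- Piecewise integral of Appendix A (equation (27)): integrating the conditional relay
outage probability `g(x)` against the exponential density of the `s`-link SNR yields
`1 - C e^{-Az} - (1-C) e^{-Bz}`. -/
theorem stmt_18 (p q Δ Δs Δd A B C : ℝ)
    (hp : 0 < p) (hq : 0 < q) (hpq : p ≠ q)
    (hΔ : 0 < Δ) (hΔs : 0 < Δs) (hΔd : 0 < Δd) (hrel : Δ - Δs - Δd = Δs * Δd)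
    (hA : A = (Δ - Δd) / p + Δd / q) (hB : B = Δs / p + (Δ - Δs) / q)
    (hC : C = p / (p - q)) :
    ∀ z : ℝ, 0 ≤ z →
      (∫ x in Set.Ioi (0:ℝ),
          (if x < Δs * z then (1:ℝ)
           else if x < (Δ - Δd) * z then 1 - Real.exp (-(Δ * z - x) / q)
           else 1 - Real.exp (-(Δd * z) / q)) *
            ((1 / p) * Real.exp (-x / p)))
        = 1 - C * Real.exp (-A * z) - (1 - C) * Real.exp (-B * z) :=
  stmt_18_general p q Δ Δs Δd A B C hp hq hpq hΔs hΔd hrel hA hB hC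
end
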